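/- arXiv:1307.0346 — 2 statements merged into one kernel-verified Lean document; each statement's English description precedes it below -/
import Mathlib

section
/- Let σ < 0 be a real constant, ε ∈ {+1, −1}, and let p = p(u) be a differentiable function on an open interval I. Consider Φ(u,v) := 1/(p(u) + 2ε√(−σ)·v) on an open set where the denominator is nonzero. Then Φ satisfies (†): Φ_vv − 2v·Φ_uv − 4Φ_u = 0 if and only if p(u)·p'(u) = 2σ for all u ∈ I. -/
/-! With `c = 2ε√(−σ)` and `D = p(u) + c v`, direct differentiation gives
`Φ_vv = 2c²/D³`, `Φ_uv = 2c p'/D³` and `Φ_u = −p'/D²`; since `D − c v = p`, the left-hand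
side of (†) collapses to `2(c² + 2 p p')/D³ = 4(p p' − 2σ)/D³`. -/

/-- First partial derivative of `f = f(u,v)` with respect to the first variable. -/
noncomputable def pd1 (f : ℝ → ℝ → ℝ) (u v : ℝ) : ℝ := deriv (fun t => f t v) u

/-- First partial derivative of `f = f(u,v)` with respect to the second variable. -/
noncomputable def pd2 (f : ℝ → ℝ → ℝ) (u v : ℝ) : ℝ := deriv (f u) v

lemma hasDerivAt_affine (a c v : ℝ) : HasDerivAt (fun w => a + c * w) c v := by
  simpa using ((hasDerivAt_id v).const_mul c).const_add a

lemma hasDerivAt_div_affine_sq (k : ℝ) {a c v : ℝ} (h : a + c * v ≠ 0) :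
    HasDerivAt (fun w => k / (a + c * w) ^ 2) (-2 * k * c / (a + c * v) ^ 3) v := by
  have hsq : HasDerivAt (fun w => (a + c * w) ^ 2) (2 * (a + c * v) * c) v := by
    simpa using (hasDerivAt_affine a c v).fun_pow 2
  refine ((hasDerivAt_const v k).div hsq (pow_ne_zero 2 h)).congr_deriv ?_
  field_simp
  ring

variable {c : ℝ} {p : ℝ → ℝ} {Φ : ℝ → ℝ → ℝ}

lemma pd2_eq_of_eq_inv_affine (hΦ : ∀ u v, Φ u v = 1 / (p u + c * v)) {u v : ℝ}
    (hD : p u + c * v ≠ 0) : pd2 Φ u v = -c / (p u + c * v) ^ 2 := by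
  have : Φ u = fun w => (p u + c * w)⁻¹ := funext fun w => by rw [hΦ, one_div]
  rw [pd2, this]
  exact ((hasDerivAt_affine (p u) c v).inv hD).deriv

lemma pd1_eq_of_eq_inv_affine (hΦ : ∀ u v, Φ u v = 1 / (p u + c * v)) {u v : ℝ}
    (hp : DifferentiableAt ℝ p u) (hD : p u + c * v ≠ 0) :
    pd1 Φ u v = -deriv p u / (p u + c * v) ^ 2 := by
  have : (fun t => Φ t v) = fun t => (p t + c * v)⁻¹ := funext fun t => by rw [hΦ, one_div]
  rw [pd1, this]
  exact (hp.hasDerivAt.add_const (c * v)).inv hD |>.deriv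

lemma pd2_pd2_eq_of_eq_inv_affine (hΦ : ∀ u v, Φ u v = 1 / (p u + c * v)) {u v : ℝ}
    (hD : p u + c * v ≠ 0) : pd2 (pd2 Φ) u v = 2 * c ^ 2 / (p u + c * v) ^ 3 := by
  have hnear : pd2 Φ u =ᶠ[nhds v] fun w => -c / (p u + c * w) ^ 2 := by
    filter_upwards [(hasDerivAt_affine (p u) c v).continuousAt.eventually_ne hD]
      with w hw using pd2_eq_of_eq_inv_affine hΦ hw
  rw [pd2, hnear.deriv_eq, (hasDerivAt_div_affine_sq _ hD).deriv]
  ring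

lemma pd2_pd1_eq_of_eq_inv_affine (hΦ : ∀ u v, Φ u v = 1 / (p u + c * v)) {u v : ℝ}
    (hp : DifferentiableAt ℝ p u) (hD : p u + c * v ≠ 0) :
    pd2 (pd1 Φ) u v = 2 * c * deriv p u / (p u + c * v) ^ 3 := by
  have hnear : pd1 Φ u =ᶠ[nhds v] fun w => -deriv p u / (p u + c * w) ^ 2 := by
    filter_upwards [(hasDerivAt_affine (p u) c v).continuousAt.eventually_ne hD]
      with w hw using pd1_eq_of_eq_inv_affine hΦ hp hw
  rw [pd2, hnear.deriv_eq, (hasDerivAt_div_affine_sq _ hD).deriv]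
  ring

lemma projectivePDE_eq_of_eq_inv_affine (hΦ : ∀ u v, Φ u v = 1 / (p u + c * v)) {u v : ℝ}
    (hp : DifferentiableAt ℝ p u) (hD : p u + c * v ≠ 0) :
    pd2 (pd2 Φ) u v - 2 * v * pd2 (pd1 Φ) u v - 4 * pd1 Φ u v =
      2 * (c ^ 2 + 2 * (p u * deriv p u)) / (p u + c * v) ^ 3 := by
  rw [pd2_pd2_eq_of_eq_inv_affine hΦ hD, pd2_pd1_eq_of_eq_inv_affine hΦ hp hD,
    pd1_eq_of_eq_inv_affine hΦ hp hD]
  field_simp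
  ring

lemma sq_two_mul_sign_mul_sqrt {σ ε : ℝ} (hσ : σ ≤ 0) (hε : ε = 1 ∨ ε = -1) :
    (2 * ε * Real.sqrt (-σ)) ^ 2 = -4 * σ := by
  have hε2 : ε ^ 2 = 1 := by rcases hε with rfl | rfl <;> norm_num
  rw [mul_pow, mul_pow, hε2, Real.sq_sqrt (neg_nonneg.mpr hσ)]
  ring

/-- For `σ < 0` and `Φ(u,v) = 1/(p(u) + 2ε√(−σ)v)`, the transformed projective PDE
`Φ_vv − 2v·Φ_uv − 4Φ_u = 0` (wherever the denominator is nonzero) holds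
if and only if `p·p' = 2σ` on `I`. -/
theorem stmt_10 (σ : ℝ) (hσ : σ < 0) (ε : ℝ) (hε : ε = 1 ∨ ε = -1)
    (a b : ℝ) (p : ℝ → ℝ)
    (hp : ∀ u ∈ Set.Ioo a b, DifferentiableAt ℝ p u)
    (Φ : ℝ → ℝ → ℝ)
    (hΦ : ∀ u v, Φ u v = 1 / (p u + 2 * ε * Real.sqrt (-σ) * v)) :
    (∀ u ∈ Set.Ioo a b, ∀ v : ℝ, p u + 2 * ε * Real.sqrt (-σ) * v ≠ 0 →
        pd2 (pd2 Φ) u v - 2 * v * pd2 (pd1 Φ) u v - 4 * pd1 Φ u v = 0) ↔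
    (∀ u ∈ Set.Ioo a b, p u * deriv p u = 2 * σ) := by
  set c := 2 * ε * Real.sqrt (-σ)
  have hc2 : c ^ 2 = -4 * σ := sq_two_mul_sign_mul_sqrt hσ.le hε
  have hc : c ≠ 0 := by
    intro h
    rw [h] at hc2
    linarith
  refine forall₂_congr fun u hu => ⟨fun h => ?_, fun h v hD => ?_⟩
  · -- at the point where the denominator is `1`, the equation reads `c ^ 2 + 2 p p' = 0`
    have hD : p u + c * ((1 - p u) / c) = 1 := by field_simp; ring
    have hD0 : p u + c * ((1 - p u) / c) ≠ 0 := by rw [hD]; exact one_ne_zero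
    have hpde := h _ hD0
    rw [projectivePDE_eq_of_eq_inv_affine hΦ (hp u hu) hD0, hD] at hpde
    linarith
  · rw [projectivePDE_eq_of_eq_inv_affine hΦ (hp u hu) hD, hc2, h]
    ring
end

section
/- Let σ be a real constant and let p = p(u), q = q(u) be differentiable functions on an open interval I with q nowhere zero. Consider Φ(u,v) := q(u)/((p(u) + q(u)·v)² + σ) on an open set where the denominator is nonzero. Then Φ satisfies (†): Φ_vv − 2v·Φ_uv − 4Φ_u = 0 if and only if both 2p(u)·q'(u) − q(u)·p'(u) = 0 and 2·(p(u)² + σ)·q'(u) + q(u)³ = 0 hold for all u ∈ I. -/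
/-!
Write `w = p + q v`, `A = 2pq' − qp'` and `B = 2(p² + σ)q' + q³`. A direct computation gives
`(w² + σ)³ (Φ_vv − 2vΦ_uv − 4Φ_u) = A (4w³ − 12pw² − 12σw + 4pσ) + B (6w² − 2σ)`.
Since `q ≠ 0`, at fixed `u` the value `w` ranges over all reals with `w² + σ ≠ 0`, a cofinite set,
so by continuity this cubic in `w` vanishes identically when the PDE holds, and its `w³` and `w²`
coefficients force `A = B = 0`.
-/

open Topology

section LinearDenominator

variable (σ d e : ℝ)

lemma hasDerivAt_linear (v : ℝ) : HasDerivAt (fun y => d + e * y) e v := by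
  simpa using ((hasDerivAt_id v).const_mul e).const_add d

lemma hasDerivAt_linear_sq_add (v : ℝ) :
    HasDerivAt (fun y => (d + e * y) ^ 2 + σ) (2 * (d + e * v) * e) v := by
  simpa using ((hasDerivAt_linear d e v).fun_pow 2).add_const σ

lemma deriv_const_div_linear_sq_add (k : ℝ) {v : ℝ} (hD : (d + e * v) ^ 2 + σ ≠ 0) :
    deriv (fun y => k / ((d + e * y) ^ 2 + σ)) v
      = -(2 * k * e * (d + e * v)) / ((d + e * v) ^ 2 + σ) ^ 2 := by
  refine ((hasDerivAt_const v k).fun_div (hasDerivAt_linear_sq_add σ d e v) hD).deriv.trans ?_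
  field_simp
  ring

lemma deriv_div_linear_sq_add_sq {N : ℝ → ℝ} {N' v : ℝ} (hN : HasDerivAt N N' v)
    (hD : (d + e * v) ^ 2 + σ ≠ 0) :
    deriv (fun y => N y / ((d + e * y) ^ 2 + σ) ^ 2) v
      = (N' * ((d + e * v) ^ 2 + σ) - 4 * (d + e * v) * e * N v) / ((d + e * v) ^ 2 + σ) ^ 3 := by
  refine (hN.fun_div ((hasDerivAt_linear_sq_add σ d e v).fun_pow 2)
    (pow_ne_zero 2 hD)).deriv.trans ?_
  field_simp
  ring

end LinearDenominator

lemma deriv_div_sq_add_of_differentiableAt (σ v : ℝ) {p q : ℝ → ℝ} {u : ℝ}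
    (hp : DifferentiableAt ℝ p u) (hq : DifferentiableAt ℝ q u)
    (hD : (p u + q u * v) ^ 2 + σ ≠ 0) :
    deriv (fun t => q t / ((p t + q t * v) ^ 2 + σ)) u
      = (deriv q u * ((p u + q u * v) ^ 2 + σ)
          - 2 * q u * (p u + q u * v) * (deriv p u + deriv q u * v))
        / ((p u + q u * v) ^ 2 + σ) ^ 2 := by
  have hw : HasDerivAt (fun t => p t + q t * v) (deriv p u + deriv q u * v) u :=
    hp.hasDerivAt.add (hq.hasDerivAt.mul_const v)
  refine (hq.hasDerivAt.fun_div ((hw.fun_pow 2).add_const σ) hD).deriv.trans ?_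
  field_simp
  ring

lemma pde_lhs_eq (σ v : ℝ) {p q : ℝ → ℝ} {u : ℝ}
    (hp : DifferentiableAt ℝ p u) (hq : DifferentiableAt ℝ q u)
    (hD : (p u + q u * v) ^ 2 + σ ≠ 0) :
    let Φ : ℝ → ℝ → ℝ := fun u v => q u / ((p u + q u * v) ^ 2 + σ)
    pd2 (pd2 Φ) u v - 2 * v * pd2 (pd1 Φ) u v - 4 * pd1 Φ u v
      = ((2 * p u * deriv q u - q u * deriv p u) *
            (4 * (p u + q u * v) ^ 3 - 12 * p u * (p u + q u * v) ^ 2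
              - 12 * σ * (p u + q u * v) + 4 * p u * σ)
          + (2 * (p u ^ 2 + σ) * deriv q u + q u ^ 3) * (6 * (p u + q u * v) ^ 2 - 2 * σ))
        / ((p u + q u * v) ^ 2 + σ) ^ 3 := by
  intro Φ
  have hnear : ∀ᶠ y in 𝓝 v, (p u + q u * y) ^ 2 + σ ≠ 0 :=
    (by fun_prop : Continuous fun y => (p u + q u * y) ^ 2 + σ).continuousAt.eventually_ne hD
  have hlin := hasDerivAt_linear (p u) (q u) v
  have hΦv : pd2 Φ u =ᶠ[𝓝 v]
      fun y => -(2 * q u * q u * (p u + q u * y)) / ((p u + q u * y) ^ 2 + σ) ^ 2 :=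
    hnear.mono fun y hy => deriv_const_div_linear_sq_add σ (p u) (q u) (q u) hy
  have hΦu : pd1 Φ u =ᶠ[𝓝 v]
      fun y => (deriv q u * ((p u + q u * y) ^ 2 + σ)
          - 2 * q u * ((p u + q u * y) * (deriv p u + deriv q u * y)))
        / ((p u + q u * y) ^ 2 + σ) ^ 2 :=
    hnear.mono fun y hy => by
      rw [pd1, deriv_div_sq_add_of_differentiableAt σ y hp hq hy, mul_assoc (2 * q u)]
  have hΦvv := hΦv.deriv_eq.trans <| deriv_div_linear_sq_add_sq σ (p u) (q u)
    (hlin.const_mul (2 * q u * q u)).neg hD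
  have hΦuv := hΦu.deriv_eq.trans <| deriv_div_linear_sq_add_sq σ (p u) (q u)
    (((hasDerivAt_linear_sq_add σ (p u) (q u) v).const_mul (deriv q u)).sub
      ((hlin.mul (hasDerivAt_linear (deriv p u) (deriv q u) v)).const_mul (2 * q u))) hD
  rw [pd2, hΦvv, pd2, hΦuv, pd1, deriv_div_sq_add_of_differentiableAt σ v hp hq hD]
  field_simp
  ring

lemma eq_zero_of_forall_sq_add_ne_zero (σ : ℝ) {f : ℝ → ℝ} (hf : Continuous f)
    (h : ∀ w, w ^ 2 + σ ≠ 0 → f w = 0) (w : ℝ) : f w = 0 := by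
  have hfinite : {w : ℝ | w ^ 2 + σ = 0}.Finite := by
    refine (Set.toFinite {√(-σ), -√(-σ)}).subset fun w (hw : w ^ 2 + σ = 0) => ?_
    have : w ^ 2 = √(-σ) ^ 2 := by rw [Real.sq_sqrt (by nlinarith)]; linarith
    exact sq_eq_sq_iff_eq_or_eq_neg.mp this
  exact congrFun (hf.ext_on (hfinite.countable.dense_compl ℝ) continuous_const h) w

lemma coeffs_eq_zero_of_forall (A B p σ : ℝ)
    (h : ∀ w : ℝ, A * (4 * w ^ 3 - 12 * p * w ^ 2 - 12 * σ * w + 4 * p * σ)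
      + B * (6 * w ^ 2 - 2 * σ) = 0) :
    A = 0 ∧ B = 0 := by
  have hA : A = 0 := by
    linear_combination (h 2 - h (-2) - 2 * h 1 + 2 * h (-1)) / 48
  refine ⟨hA, ?_⟩
  linear_combination (h 1 + h (-1) - 2 * h 0) / 12 + 2 * p * hA

/-- For `Φ(u,v) = q(u)/((p(u) + q(u)v)² + σ)` with `q` nowhere zero, the transformed
projective PDE `Φ_vv − 2v·Φ_uv − 4Φ_u = 0` (wherever the denominator is nonzero)
holds if and only if `2pq' − qp' = 0` and `2(p² + σ)q' + q³ = 0` on `I`. -/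
theorem stmt_11 (σ : ℝ) (a b : ℝ) (p q : ℝ → ℝ)
    (hp : ∀ u ∈ Set.Ioo a b, DifferentiableAt ℝ p u)
    (hq : ∀ u ∈ Set.Ioo a b, DifferentiableAt ℝ q u)
    (hq0 : ∀ u ∈ Set.Ioo a b, q u ≠ 0)
    (Φ : ℝ → ℝ → ℝ)
    (hΦ : ∀ u v, Φ u v = q u / ((p u + q u * v) ^ 2 + σ)) :
    (∀ u ∈ Set.Ioo a b, ∀ v : ℝ, (p u + q u * v) ^ 2 + σ ≠ 0 →
        pd2 (pd2 Φ) u v - 2 * v * pd2 (pd1 Φ) u v - 4 * pd1 Φ u v = 0) ↔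
    (∀ u ∈ Set.Ioo a b, 2 * p u * deriv q u - q u * deriv p u = 0 ∧
        2 * ((p u) ^ 2 + σ) * deriv q u + (q u) ^ 3 = 0) := by
  obtain rfl : Φ = fun u v => q u / ((p u + q u * v) ^ 2 + σ) := funext₂ hΦ
  constructor
  · intro hPDE u hu
    refine coeffs_eq_zero_of_forall _ _ (p u) σ
      (eq_zero_of_forall_sq_add_ne_zero σ ?_ fun w hw => ?_)
    · fun_prop
    · have hv : p u + q u * ((w - p u) / q u) = w := by field_simp [hq0 u hu]; ring
      have hD : (p u + q u * ((w - p u) / q u)) ^ 2 + σ ≠ 0 := by rwa [hv]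
      have hzero := hPDE u hu _ hD
      rw [pde_lhs_eq σ _ (hp u hu) (hq u hu) hD, hv] at hzero
      exact (div_eq_zero_iff.mp hzero).resolve_right (pow_ne_zero 3 hw)
  · intro h u hu v hD
    rw [pde_lhs_eq σ v (hp u hu) (hq u hu) hD, (h u hu).1, (h u hu).2]
    simp
end
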